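/- arXiv:1103.5482 — 5 statements merged into one kernel-verified Lean document; each statement's English description precedes it below -/
import Mathlib

section
/- In the setup of the previous statement, with additionally a B₀-module K and a B₀-module map u₀ : I⊗_{B₀}F₀ → K, form the pushout M := K ⊕_{I⊗E₀} L of L along the composite u₀ ∘ (I⊗f₀) : I⊗_{B₀}E₀ → K. Then M is annihilated by I, i.e. M is a B₀-module, and 0 → K → M → N₀ → 0 is a short exact sequence of B₀-modules. -/
/-!
Writing `ι : I ⊗ E₀ → L` and `q := p|_L : L → ker f₀`, the sequence `0 → I ⊗ E₀ → L → ker f₀ → 0`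
is exact (`q` is onto because `p` is, and `ker q = im μ`), and pushing an exact sequence out along
any map `g` keeps it exact, which gives `0 → K → M → ker f₀ → 0`. The ideal `I` kills `M` because
it kills `K`, and for `x ∈ L` we have `i • x = ι (i ⊗ p x)` with `g (i ⊗ p x) = u₀ (i ⊗ f₀ (p x)) = 0`.
-/

open TensorProduct

section Pushout

variable {R A K L N : Type*} [CommRing R] [AddCommGroup A] [AddCommGroup K] [AddCommGroup L]
  [AddCommGroup N] [Module R A] [Module R K] [Module R L] [Module R N]

/-- The pushout `K ⊕_A L` of `ι : A → L` along `g : A → K`. -/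
abbrev ModulePushout (g : A →ₗ[R] K) (ι : A →ₗ[R] L) : Type _ :=
  (K × L) ⧸ LinearMap.range (g.prod (-ι))

namespace ModulePushout

variable (g : A →ₗ[R] K) (ι : A →ₗ[R] L)

def inl : K →ₗ[R] ModulePushout g ι :=
  (LinearMap.range (g.prod (-ι))).mkQ ∘ₗ LinearMap.inl R K L

@[simp]
theorem inl_apply (k : K) : inl g ι k = Submodule.Quotient.mk (k, 0) := rfl

variable {ι}

def desc (q : L →ₗ[R] N) (hq : q ∘ₗ ι = 0) : ModulePushout g ι →ₗ[R] N :=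
  (LinearMap.range (g.prod (-ι))).liftQ (q ∘ₗ LinearMap.snd R K L) <| by
    rintro _ ⟨a, rfl⟩
    simpa using congr($hq a)

@[simp]
theorem desc_mk (q : L →ₗ[R] N) (hq : q ∘ₗ ι = 0) (x : K × L) :
    desc g q hq (Submodule.Quotient.mk x) = q x.2 := rfl

variable {g}

theorem inl_injective (hι : Function.Injective ι) : Function.Injective (inl g ι) := by
  intro k k' h
  obtain ⟨a, ha⟩ := (Submodule.Quotient.eq _).mp h
  have hιa : ι a = 0 := by simpa using congr(($ha).2)
  rw [hι (hιa.trans ι.map_zero.symm)] at ha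
  simpa [sub_eq_zero, eq_comm] using congr(($ha).1)

theorem desc_surjective {q : L →ₗ[R] N} (hq : q ∘ₗ ι = 0) (hqs : Function.Surjective q) :
    Function.Surjective (desc g q hq) := fun n =>
  let ⟨x, hx⟩ := hqs n
  ⟨Submodule.Quotient.mk (0, x), hx⟩

theorem exact_inl_desc {q : L →ₗ[R] N} (hq : q ∘ₗ ι = 0) (hexact : Function.Exact ι q) :
    Function.Exact (inl g ι) (desc g q hq) := by
  refine fun m => ⟨fun hm => ?_, ?_⟩
  · obtain ⟨⟨k, x⟩, rfl⟩ := Submodule.Quotient.mk_surjective _ m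
    obtain ⟨a, rfl⟩ := (hexact x).mp hm
    -- `(k, ι a) ≡ (k + g a, 0)` modulo `(g a, -ι a)`
    refine ⟨k + g a, (Submodule.Quotient.eq _).mpr ⟨a, ?_⟩⟩
    simp
  · rintro ⟨k, rfl⟩
    simp

theorem smul_eq_zero_of_forall {r : R} (hK : ∀ k : K, r • k = 0)
    (hL : ∀ x : L, ∃ a, g a = 0 ∧ ι a = r • x) (m : ModulePushout g ι) : r • m = 0 := by
  obtain ⟨⟨k, x⟩, rfl⟩ := Submodule.Quotient.mk_surjective _ m
  obtain ⟨a, hga, hιa⟩ := hL x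
  rw [← Submodule.Quotient.mk_smul, Submodule.Quotient.mk_eq_zero]
  exact ⟨-a, by simp [hga, hιa, hK]⟩

end ModulePushout

end Pushout

theorem stmt1_general {B : Type*} [CommRing B] (I : Ideal B)
    {E E₀ F₀ K : Type*} [AddCommGroup E] [AddCommGroup E₀] [AddCommGroup F₀]
    [AddCommGroup K] [Module B E] [Module B E₀] [Module B F₀] [Module B K]
    (hK : ∀ i ∈ I, ∀ x : K, i • x = 0)
    (p : E →ₗ[B] E₀) (hp : Function.Surjective p)
    (μ : (↥I ⊗[B] E₀) →ₗ[B] E)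
    (hμ : ∀ (i : ↥I) (e : E), μ (i ⊗ₜ[B] p e) = (i : B) • e)
    (hμinj : Function.Injective μ)
    (hex : Function.Exact μ p)
    (f₀ : E₀ →ₗ[B] F₀)
    (u₀ : (↥I ⊗[B] F₀) →ₗ[B] K)
    -- `L = ker (f₀ ∘ p)` with the corestriction of `μ` to `L`
    (ι : (↥I ⊗[B] E₀) →ₗ[B] ↥(LinearMap.ker (f₀ ∘ₗ p)))
    (hι : ∀ t, (ι t : E) = μ t) :
    -- the pushout `M`
    letI g : (↥I ⊗[B] E₀) →ₗ[B] K := u₀ ∘ₗ LinearMap.lTensor ↥I f₀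
    letI M := (K × ↥(LinearMap.ker (f₀ ∘ₗ p))) ⧸ LinearMap.range (g.prod (-ι))
    (∀ i ∈ I, ∀ m : M, i • m = 0) ∧
    ∃ (κ : K →ₗ[B] M) (π : M →ₗ[B] ↥(LinearMap.ker f₀)),
      (∀ k, κ k = Submodule.Quotient.mk (k, 0)) ∧
      (∀ x : ↥(LinearMap.ker (f₀ ∘ₗ p)),
        (π (Submodule.Quotient.mk (0, x)) : E₀) = p (x : E)) ∧
      Function.Injective κ ∧ Function.Surjective π ∧ Function.Exact κ π := by
  let g : (↥I ⊗[B] E₀) →ₗ[B] K := u₀ ∘ₗ LinearMap.lTensor ↥I f₀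
  let q : LinearMap.ker (f₀ ∘ₗ p) →ₗ[B] LinearMap.ker f₀ := p.restrict fun _ hx => hx
  have hq : q ∘ₗ ι = 0 := LinearMap.ext fun t => Subtype.ext <|
    show p (ι t : E) = 0 by rw [hι]; exact hex.apply_apply_eq_zero t
  have hιinj : Function.Injective ι := fun s t h => hμinj <| by rw [← hι, ← hι, h]
  have hqs : Function.Surjective q := fun y =>
    let ⟨e, he⟩ := hp y
    ⟨⟨e, by simp [he]⟩, Subtype.ext he⟩
  have hιq : Function.Exact ι q := fun x => by
    refine ⟨fun hx => ?_, fun ⟨t, ht⟩ => ht ▸ congr($hq t)⟩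
    obtain ⟨t, ht⟩ := (hex x).mp congr(($hx : E₀))
    exact ⟨t, Subtype.ext ((hι t).trans ht)⟩
  refine ⟨fun i hi => ModulePushout.smul_eq_zero_of_forall (hK i hi) fun x => ?_,
    ModulePushout.inl g ι, ModulePushout.desc g q hq, fun _ => rfl, fun _ => rfl,
    ModulePushout.inl_injective hιinj, ModulePushout.desc_surjective hq hqs,
    ModulePushout.exact_inl_desc hq hιq⟩
  refine ⟨⟨i, hi⟩ ⊗ₜ p x, ?_, Subtype.ext ((hι _).trans (hμ _ _))⟩
  simp [show f₀ (p x) = 0 from x.2]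

theorem stmt1 {B : Type*} [CommRing B] (I : Ideal B) (hI : I ^ 2 = ⊥)
    {E E₀ F₀ K : Type*} [AddCommGroup E] [AddCommGroup E₀] [AddCommGroup F₀]
    [AddCommGroup K] [Module B E] [Module B E₀] [Module B F₀] [Module B K]
    (hE₀ : ∀ i ∈ I, ∀ x : E₀, i • x = 0) (hF₀ : ∀ i ∈ I, ∀ x : F₀, i • x = 0)
    (hK : ∀ i ∈ I, ∀ x : K, i • x = 0)
    (p : E →ₗ[B] E₀) (hp : Function.Surjective p)
    (μ : (↥I ⊗[B] E₀) →ₗ[B] E)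
    (hμ : ∀ (i : ↥I) (e : E), μ (i ⊗ₜ[B] p e) = (i : B) • e)
    (hμinj : Function.Injective μ)
    (hex : Function.Exact μ p)
    (f₀ : E₀ →ₗ[B] F₀) (hf₀ : Function.Surjective f₀)
    (u₀ : (↥I ⊗[B] F₀) →ₗ[B] K)
    -- `L = ker (f₀ ∘ p)` with the corestriction of `μ` to `L`
    (ι : (↥I ⊗[B] E₀) →ₗ[B] ↥(LinearMap.ker (f₀ ∘ₗ p)))
    (hι : ∀ t, (ι t : E) = μ t) :
    -- the pushout `M`
    letI g : (↥I ⊗[B] E₀) →ₗ[B] K := u₀ ∘ₗ LinearMap.lTensor ↥I f₀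
    letI M := (K × ↥(LinearMap.ker (f₀ ∘ₗ p))) ⧸ LinearMap.range (g.prod (-ι))
    (∀ i ∈ I, ∀ m : M, i • m = 0) ∧
    ∃ (κ : K →ₗ[B] M) (π : M →ₗ[B] ↥(LinearMap.ker f₀)),
      (∀ k, κ k = Submodule.Quotient.mk (k, 0)) ∧
      (∀ x : ↥(LinearMap.ker (f₀ ∘ₗ p)),
        (π (Submodule.Quotient.mk (0, x)) : E₀) = p (x : E)) ∧
      Function.Injective κ ∧ Function.Surjective π ∧ Function.Exact κ π :=
  stmt1_general I hK p hp μ hμ hμinj hex f₀ u₀ ι hι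
end

section
/- Given a splitting s : L → K of the map u₀∘(I⊗f₀) (i.e. a B-linear map s : L → K whose restriction to I⊗_{B₀}E₀ equals u₀∘(I⊗f₀)), the pushout F := K ⊕_L E of E along s yields a short exact sequence 0 → K → F → F₀ → 0 and a morphism of extensions from (0 → I⊗E₀ → E → E₀ → 0) to it with kernel map u₀∘(I⊗f₀) and cokernel map f₀; that is, F solves the lifting problem. -/
/-!
Everything is a formal property of the pushout `F = K ⊕_L E`: `K → F` is injective because
`L → E` is, and `F / K ≅ E / L ≅ F₀` because `L = ker (f₀ ∘ p)` and `f₀ ∘ p` is onto. The square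
with `μ` commutes because `μ` factors through `ι : I ⊗ E₀ → L` and `s ∘ ι = u₀ ∘ (I ⊗ f₀)`.
-/

open TensorProduct

section Pushout

variable {R K E M : Type*} [Ring R] [AddCommGroup K] [AddCommGroup E] [AddCommGroup M]
  [Module R K] [Module R E] [Module R M] {L : Submodule R E} (s : L →ₗ[R] K)

/-- The pushout `K ⊕_L E` of `L ≤ E` along `s` is `(K × E) ⧸ pushoutRel s`. -/
abbrev pushoutRel : Submodule R (K × E) := LinearMap.range (s.prod (-L.subtype))

def pushoutInl : K →ₗ[R] (K × E) ⧸ pushoutRel s := (pushoutRel s).mkQ ∘ₗ LinearMap.inl R K E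

def pushoutInr : E →ₗ[R] (K × E) ⧸ pushoutRel s := (pushoutRel s).mkQ ∘ₗ LinearMap.inr R K E

lemma pushoutInl_add_pushoutInr (k : K) (e : E) :
    pushoutInl s k + pushoutInr s e = Submodule.Quotient.mk (k, e) := by
  simp [pushoutInl, pushoutInr, ← Submodule.Quotient.mk_add]

lemma pushoutInr_coe (x : L) : pushoutInr s x = pushoutInl s (s x) := by
  refine (Submodule.Quotient.eq _).mpr ⟨-x, ?_⟩
  simp

lemma pushoutInl_injective : Function.Injective (pushoutInl s) := by
  refine (injective_iff_map_eq_zero _).mpr fun k hk => ?_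
  obtain ⟨x, hx⟩ := (Submodule.Quotient.mk_eq_zero _).mp hk
  obtain ⟨hsx, hx0⟩ := Prod.ext_iff.mp hx
  have : x = 0 := Subtype.ext (neg_eq_zero.mp hx0)
  simpa [this] using hsx.symm

def pushoutDesc (φ : E →ₗ[R] M) (hφ : L ≤ LinearMap.ker φ) : (K × E) ⧸ pushoutRel s →ₗ[R] M :=
  (pushoutRel s).liftQ (φ ∘ₗ LinearMap.snd R K E) <| by
    rintro _ ⟨x, rfl⟩
    simpa using hφ x.2

variable {s}

@[simp]
lemma pushoutDesc_pushoutInl {φ : E →ₗ[R] M} (hφ : L ≤ LinearMap.ker φ) (k : K) :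
    pushoutDesc s φ hφ (pushoutInl s k) = 0 := by
  simp [pushoutDesc, pushoutInl]

@[simp]
lemma pushoutDesc_pushoutInr {φ : E →ₗ[R] M} (hφ : L ≤ LinearMap.ker φ) (e : E) :
    pushoutDesc s φ hφ (pushoutInr s e) = φ e :=
  rfl

lemma pushoutDesc_surjective {φ : E →ₗ[R] M} (hφ : L ≤ LinearMap.ker φ)
    (hsurj : Function.Surjective φ) : Function.Surjective (pushoutDesc s φ hφ) := fun m =>
  let ⟨e, he⟩ := hsurj m
  ⟨pushoutInr s e, he⟩

lemma exact_pushoutInl_pushoutDesc {φ : E →ₗ[R] M} (hφ : L ≤ LinearMap.ker φ)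
    (hker : LinearMap.ker φ ≤ L) : Function.Exact (pushoutInl s) (pushoutDesc s φ hφ) := by
  intro y
  obtain ⟨⟨k, e⟩, rfl⟩ := Submodule.Quotient.mk_surjective _ y
  rw [← pushoutInl_add_pushoutInr, map_add, pushoutDesc_pushoutInl, pushoutDesc_pushoutInr,
    zero_add]
  constructor
  · intro he
    have he : e ∈ L := hker he
    refine ⟨k + s ⟨e, he⟩, ?_⟩
    rw [map_add, ← pushoutInr_coe]
  · rintro ⟨k', hk'⟩
    simpa using (congrArg (pushoutDesc s φ hφ) hk').symm

end Pushout

theorem stmt4_general {B : Type*} [CommRing B] (I : Ideal B)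
    {E E₀ F₀ K : Type*} [AddCommGroup E] [AddCommGroup E₀] [AddCommGroup F₀]
    [AddCommGroup K] [Module B E] [Module B E₀] [Module B F₀] [Module B K]
    (p : E →ₗ[B] E₀) (hp : Function.Surjective p)
    (μ : (↥I ⊗[B] E₀) →ₗ[B] E)
    (f₀ : E₀ →ₗ[B] F₀) (hf₀ : Function.Surjective f₀)
    (u₀ : (↥I ⊗[B] F₀) →ₗ[B] K)
    (ι : (↥I ⊗[B] E₀) →ₗ[B] ↥(LinearMap.ker (f₀ ∘ₗ p)))
    (hι : ∀ t, (ι t : E) = μ t)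
    -- the splitting `s : L → K` of `u₀ ∘ (I⊗f₀)`
    (s : ↥(LinearMap.ker (f₀ ∘ₗ p)) →ₗ[B] K)
    (hs : ∀ t, s (ι t) = u₀ (LinearMap.lTensor ↥I f₀ t)) :
    -- the pushout `F := K ⊕_L E`
    letI F := (K × E) ⧸
      LinearMap.range (s.prod (-(LinearMap.ker (f₀ ∘ₗ p)).subtype))
    ∃ (κ : K →ₗ[B] F) (q : F →ₗ[B] F₀) (f : E →ₗ[B] F),
      (∀ k, κ k = Submodule.Quotient.mk (k, 0)) ∧
      (∀ e, f e = Submodule.Quotient.mk (0, e)) ∧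
      (∀ e, q (Submodule.Quotient.mk (0, e)) = f₀ (p e)) ∧
      Function.Injective κ ∧ Function.Surjective q ∧ Function.Exact κ q ∧
      (∀ t, f (μ t) = κ (u₀ (LinearMap.lTensor ↥I f₀ t))) ∧
      (∀ e, q (f e) = f₀ (p e)) := by
  refine ⟨pushoutInl s, pushoutDesc s (f₀ ∘ₗ p) le_rfl, pushoutInr s,
    fun _ => rfl, fun _ => rfl, fun _ => rfl, pushoutInl_injective s,
    pushoutDesc_surjective le_rfl (hf₀.comp hp), exact_pushoutInl_pushoutDesc le_rfl le_rfl,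
    fun t => ?_, fun _ => rfl⟩
  rw [← hι, pushoutInr_coe, hs]

theorem stmt4 {B : Type*} [CommRing B] (I : Ideal B) (hI : I ^ 2 = ⊥)
    {E E₀ F₀ K : Type*} [AddCommGroup E] [AddCommGroup E₀] [AddCommGroup F₀]
    [AddCommGroup K] [Module B E] [Module B E₀] [Module B F₀] [Module B K]
    (hE₀ : ∀ i ∈ I, ∀ x : E₀, i • x = 0) (hF₀ : ∀ i ∈ I, ∀ x : F₀, i • x = 0)
    (hK : ∀ i ∈ I, ∀ x : K, i • x = 0)
    (p : E →ₗ[B] E₀) (hp : Function.Surjective p)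
    (μ : (↥I ⊗[B] E₀) →ₗ[B] E)
    (hμ : ∀ (i : ↥I) (e : E), μ (i ⊗ₜ[B] p e) = (i : B) • e)
    (hμinj : Function.Injective μ)
    (hex : Function.Exact μ p)
    (f₀ : E₀ →ₗ[B] F₀) (hf₀ : Function.Surjective f₀)
    (u₀ : (↥I ⊗[B] F₀) →ₗ[B] K)
    (ι : (↥I ⊗[B] E₀) →ₗ[B] ↥(LinearMap.ker (f₀ ∘ₗ p)))
    (hι : ∀ t, (ι t : E) = μ t)
    -- the splitting `s : L → K` of `u₀ ∘ (I⊗f₀)`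
    (s : ↥(LinearMap.ker (f₀ ∘ₗ p)) →ₗ[B] K)
    (hs : ∀ t, s (ι t) = u₀ (LinearMap.lTensor ↥I f₀ t)) :
    -- the pushout `F := K ⊕_L E`
    letI F := (K × E) ⧸
      LinearMap.range (s.prod (-(LinearMap.ker (f₀ ∘ₗ p)).subtype))
    ∃ (κ : K →ₗ[B] F) (q : F →ₗ[B] F₀) (f : E →ₗ[B] F),
      (∀ k, κ k = Submodule.Quotient.mk (k, 0)) ∧
      (∀ e, f e = Submodule.Quotient.mk (0, e)) ∧
      (∀ e, q (Submodule.Quotient.mk (0, e)) = f₀ (p e)) ∧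
      Function.Injective κ ∧ Function.Surjective q ∧ Function.Exact κ q ∧
      (∀ t, f (μ t) = κ (u₀ (LinearMap.lTensor ↥I f₀ t))) ∧
      (∀ e, q (f e) = f₀ (p e)) :=
  stmt4_general I p hp μ f₀ hf₀ u₀ ι hι s hs
end

section
/- Let A → B₁ and A → B₂ be ring maps, B₀ = B₁⊗_A B₂, E₂ a B₂-module, E₀ = B₁⊗_A E₂, and let f₀ : E₀ → F₀ be a surjection of B₀-modules with kernel N₀. Then the map N₀ → Ω_{B₁/A} ⊗_{B₁} F₀ sending an element Σ bᵢ⊗eᵢ ∈ N₀ ⊆ B₁⊗_A E₂ to Σ dbᵢ ⊗ f₀(1⊗eᵢ) is a well-defined B₀-linear map. -/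
/-!
The assignment `(b₁ ⊗ b₂) ⊗ e ↦ f₀((1 ⊗ b₂) ⊗ e) ⊗ d b₁` is balanced over `A` because `d` is
`A`-linear, and over `B₂` because `b₂` enters only through `f₀`, so it descends to `E₀`.
This map `δ` commutes with the action of `1 ⊗ B₂`, while the Leibniz rule gives
`δ((c₁ ⊗ 1) • x) = (c₁ ⊗ 1) • δ x + f₀ x ⊗ d c₁`. The error term vanishes on `ker f₀`, and
`B₀` is generated by `B₁ ⊗ 1` and `1 ⊗ B₂`, so `δ` is `B₀`-linear there.
-/

open TensorProduct

attribute [local instance] Algebra.TensorProduct.rightAlgebra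

namespace Algebra.TensorProduct

variable {R S T : Type*} [CommSemiring R] [Semiring S] [Algebra R S] [CommSemiring T]
  [Algebra R T]

lemma right_smul_tmul (t : T) (s : S) (t' : T) : t • (s ⊗ₜ[R] t') = s ⊗ₜ[R] (t * t') := by
  rw [Algebra.smul_def, right_algebraMap_apply, tmul_mul_tmul, one_mul]

end Algebra.TensorProduct

theorem AddMonoidHom.map_smul_of_tmul_one_of_one_tmul
    {R S T M N : Type*} [CommSemiring R] [Semiring S] [Semiring T]
    [Algebra R S] [Algebra R T] [AddCommMonoid M] [Module (S ⊗[R] T) M]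
    [AddCommMonoid N] [Module (S ⊗[R] T) N] (g : M →+ N)
    (hS : ∀ (s : S) (x : M), g ((s ⊗ₜ[R] (1 : T)) • x) = (s ⊗ₜ[R] (1 : T)) • g x)
    (hT : ∀ (t : T) (x : M), g (((1 : S) ⊗ₜ[R] t) • x) = ((1 : S) ⊗ₜ[R] t) • g x)
    (c : S ⊗[R] T) (x : M) : g (c • x) = c • g x := by
  induction c using TensorProduct.induction_on with
  | zero => simp
  | tmul s t =>
    have hst : s ⊗ₜ[R] t = (s ⊗ₜ[R] (1 : T)) * ((1 : S) ⊗ₜ[R] t) := by simp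
    rw [hst, mul_smul, mul_smul, hS, hT]
  | add c c' hc hc' => rw [add_smul, map_add, hc, hc', add_smul]

section LeftDifferential

variable {A B₁ B₂ : Type*} [CommRing A] [CommRing B₁] [CommRing B₂]
    [Algebra A B₁] [Algebra A B₂]
    {E₂ F₀ : Type*} [AddCommGroup E₂] [Module B₂ E₂]
    [AddCommGroup F₀] [Module (B₁ ⊗[A] B₂) F₀]
    [Module B₁ F₀] [IsScalarTower B₁ (B₁ ⊗[A] B₂) F₀]
    (f₀ : ((B₁ ⊗[A] B₂) ⊗[B₂] E₂) →ₗ[B₁ ⊗[A] B₂] F₀)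

local notation "Ω" => KaehlerDifferential A B₁
local notation "d" => KaehlerDifferential.D A B₁

lemma map_tmul_tmul_eq_smul (b₁ : B₁) (b₂ : B₂) (e : E₂) :
    f₀ ((b₁ ⊗ₜ b₂) ⊗ₜ e) = b₁ • f₀ ((1 ⊗ₜ b₂) ⊗ₜ e) := by
  rw [← algebraMap_smul (B₁ ⊗[A] B₂), ← map_smul, Algebra.TensorProduct.algebraMap_apply,
    smul_tmul', smul_eq_mul, Algebra.TensorProduct.tmul_mul_tmul, mul_one, one_mul]
  rfl

omit [IsScalarTower B₁ (B₁ ⊗[A] B₂) F₀] in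
noncomputable def leftDifferential₃ : B₁ →+ B₂ →+ E₂ →+ F₀ ⊗[B₁] Ω :=
  AddMonoidHom.mk' (fun b₁ => AddMonoidHom.mk' (fun b₂ => AddMonoidHom.mk'
      (fun e => f₀ ((1 ⊗ₜ b₂) ⊗ₜ e) ⊗ₜ d b₁)
      (fun e e' => by simp [tmul_add, add_tmul]))
    (fun b₂ b₂' => by ext; simp [tmul_add, add_tmul]))
  (fun b₁ b₁' => by ext; simp [tmul_add])

lemma leftDifferential₃_smul_left (a : A) (b₁ : B₁) (b₂ : B₂) :
    leftDifferential₃ f₀ (a • b₁) b₂ = leftDifferential₃ f₀ b₁ (a • b₂) := by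
  ext e
  simp only [leftDifferential₃, AddMonoidHom.mk'_apply]
  rw [Derivation.map_smul, ← algebraMap_smul B₁ a (d b₁), ← smul_tmul,
    ← map_tmul_tmul_eq_smul, Algebra.algebraMap_eq_smul_one, smul_tmul]

noncomputable def leftDifferential₂ : B₁ ⊗[A] B₂ →+ E₂ →+ F₀ ⊗[B₁] Ω :=
  liftAddHom (leftDifferential₃ f₀) (leftDifferential₃_smul_left f₀)

lemma leftDifferential₂_smul_left (r : B₂) (m : B₁ ⊗[A] B₂) (e : E₂) :
    leftDifferential₂ f₀ (r • m) e = leftDifferential₂ f₀ m (r • e) := by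
  induction m using TensorProduct.induction_on with
  | zero => simp
  | tmul b₁ b₂ =>
    simp only [leftDifferential₂, Algebra.TensorProduct.right_smul_tmul, liftAddHom_tmul,
      leftDifferential₃, AddMonoidHom.mk'_apply]
    rw [← Algebra.TensorProduct.right_smul_tmul, smul_tmul]
  | add m m' hm hm' => simp only [smul_add, map_add, AddMonoidHom.add_apply, hm, hm']

noncomputable def leftDifferential : (B₁ ⊗[A] B₂) ⊗[B₂] E₂ →+ F₀ ⊗[B₁] Ω :=
  liftAddHom (leftDifferential₂ f₀) (leftDifferential₂_smul_left f₀)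

lemma leftDifferential_tmul (b₁ : B₁) (b₂ : B₂) (e : E₂) :
    leftDifferential f₀ ((b₁ ⊗ₜ[A] b₂) ⊗ₜ[B₂] e) = f₀ ((1 ⊗ₜ b₂) ⊗ₜ e) ⊗ₜ d b₁ :=
  rfl

lemma leftDifferential_one_tmul_smul (c₂ : B₂) (x : (B₁ ⊗[A] B₂) ⊗[B₂] E₂) :
    leftDifferential f₀ (((1 : B₁) ⊗ₜ[A] c₂) • x) =
      ((1 : B₁) ⊗ₜ[A] c₂) • leftDifferential f₀ x := by
  induction x using TensorProduct.induction_on with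
  | zero => simp
  | tmul m e =>
    induction m using TensorProduct.induction_on with
    | zero => simp
    | tmul b₁ b₂ =>
      rw [smul_tmul', smul_eq_mul, Algebra.TensorProduct.tmul_mul_tmul, one_mul,
        leftDifferential_tmul, leftDifferential_tmul, smul_tmul', ← map_smul,
        smul_tmul', smul_eq_mul, Algebra.TensorProduct.tmul_mul_tmul, one_mul]
    | add m m' hm hm' => simp only [add_tmul, smul_add, map_add, hm, hm']
  | add x x' hx hx' => simp only [smul_add, map_add, hx, hx']

lemma leftDifferential_tmul_one_smul (c₁ : B₁) (x : (B₁ ⊗[A] B₂) ⊗[B₂] E₂) :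
    leftDifferential f₀ ((c₁ ⊗ₜ[A] (1 : B₂)) • x) =
      (c₁ ⊗ₜ[A] (1 : B₂)) • leftDifferential f₀ x + f₀ x ⊗ₜ d c₁ := by
  induction x using TensorProduct.induction_on with
  | zero => simp
  | tmul m e =>
    induction m using TensorProduct.induction_on with
    | zero => simp
    | tmul b₁ b₂ =>
      rw [smul_tmul', smul_eq_mul, Algebra.TensorProduct.tmul_mul_tmul, one_mul,
        leftDifferential_tmul, leftDifferential_tmul, Derivation.leibniz, tmul_add,
        ← smul_tmul, ← smul_tmul, smul_tmul', map_tmul_tmul_eq_smul f₀ b₁,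
        ← algebraMap_smul (B₁ ⊗[A] B₂) c₁]
      rfl
    | add m m' hm hm' =>
      simp only [add_tmul, smul_add, map_add, hm, hm']
      abel
  | add x x' hx hx' =>
    simp only [smul_add, map_add, add_tmul, hx, hx']
    abel

end LeftDifferential

theorem stmt7_general {A B₁ B₂ : Type*} [CommRing A] [CommRing B₁] [CommRing B₂]
    [Algebra A B₁] [Algebra A B₂]
    {E₂ F₀ : Type*} [AddCommGroup E₂] [Module B₂ E₂]
    [AddCommGroup F₀] [Module (B₁ ⊗[A] B₂) F₀]
    [Module B₁ F₀] [IsScalarTower B₁ (B₁ ⊗[A] B₂) F₀]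
    (f₀ : ((B₁ ⊗[A] B₂) ⊗[B₂] E₂) →ₗ[B₁ ⊗[A] B₂] F₀) :
    ∃ δ : ((B₁ ⊗[A] B₂) ⊗[B₂] E₂) →+ (F₀ ⊗[B₁] KaehlerDifferential A B₁),
      -- `δ` is the globally defined assignment `b₁⊗b₂⊗e ↦ f₀(1⊗b₂⊗e) ⊗ d b₁`
      (∀ (b₁ : B₁) (b₂ : B₂) (e : E₂),
        δ ((b₁ ⊗ₜ[A] b₂) ⊗ₜ[B₂] e) =
          f₀ (((1 : B₁) ⊗ₜ[A] b₂) ⊗ₜ[B₂] e) ⊗ₜ[B₁]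
            KaehlerDifferential.D A B₁ b₁) ∧
      -- its restriction to `N₀ = ker f₀` is `B₀`-linear
      ∃ β : ↥(LinearMap.ker f₀) →ₗ[B₁ ⊗[A] B₂]
          (F₀ ⊗[B₁] KaehlerDifferential A B₁),
        ∀ x : ↥(LinearMap.ker f₀), β x = δ (x : (B₁ ⊗[A] B₂) ⊗[B₂] E₂) := by
  let δ := leftDifferential f₀
  let β := δ.comp (LinearMap.ker f₀).subtype.toAddMonoidHom
  have smul_left (c₁ : B₁) (x : LinearMap.ker f₀) :
      β ((c₁ ⊗ₜ[A] (1 : B₂)) • x) = (c₁ ⊗ₜ[A] (1 : B₂)) • β x := by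
    simp [β, δ, leftDifferential_tmul_one_smul, LinearMap.mem_ker.mp x.2]
  have smul_right (c₂ : B₂) (x : LinearMap.ker f₀) :
      β (((1 : B₁) ⊗ₜ[A] c₂) • x) = ((1 : B₁) ⊗ₜ[A] c₂) • β x :=
    leftDifferential_one_tmul_smul f₀ c₂ x
  exact ⟨δ, leftDifferential_tmul f₀,
    { β with map_smul' := β.map_smul_of_tmul_one_of_one_tmul smul_left smul_right },
    fun _ => rfl⟩

theorem stmt7 {A B₁ B₂ : Type*} [CommRing A] [CommRing B₁] [CommRing B₂]
    [Algebra A B₁] [Algebra A B₂]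
    {E₂ F₀ : Type*} [AddCommGroup E₂] [Module B₂ E₂]
    [AddCommGroup F₀] [Module (B₁ ⊗[A] B₂) F₀]
    [Module B₁ F₀] [IsScalarTower B₁ (B₁ ⊗[A] B₂) F₀]
    (f₀ : ((B₁ ⊗[A] B₂) ⊗[B₂] E₂) →ₗ[B₁ ⊗[A] B₂] F₀)
    (hf₀ : Function.Surjective f₀) :
    ∃ δ : ((B₁ ⊗[A] B₂) ⊗[B₂] E₂) →+ (F₀ ⊗[B₁] KaehlerDifferential A B₁),
      -- `δ` is the globally defined assignment `b₁⊗b₂⊗e ↦ f₀(1⊗b₂⊗e) ⊗ d b₁`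
      (∀ (b₁ : B₁) (b₂ : B₂) (e : E₂),
        δ ((b₁ ⊗ₜ[A] b₂) ⊗ₜ[B₂] e) =
          f₀ (((1 : B₁) ⊗ₜ[A] b₂) ⊗ₜ[B₂] e) ⊗ₜ[B₁]
            KaehlerDifferential.D A B₁ b₁) ∧
      -- its restriction to `N₀ = ker f₀` is `B₀`-linear
      ∃ β : ↥(LinearMap.ker f₀) →ₗ[B₁ ⊗[A] B₂]
          (F₀ ⊗[B₁] KaehlerDifferential A B₁),
        ∀ x : ↥(LinearMap.ker f₀), β x = δ (x : (B₁ ⊗[A] B₂) ⊗[B₂] E₂) :=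
  stmt7_general f₀
end

section
/- Let Ab be an abelian category with enough injectives, B a full abelian subcategory, and f : E → F a morphism in D(Ab) between complexes with cohomology in B vanishing in positive degrees, such that H⁰(f) is an isomorphism. Then H^{-1}(f) is an epimorphism if and only if the induced map Ext¹(F, I) → Ext¹(E, I) (i.e. Hom_{D(Ab)}(F, I[1]) → Hom_{D(Ab)}(E, I[1])) is injective for every object I of B. -/
/-!
Complete `f` to a distinguished triangle `E → F → G → E⟦1⟧`. The homology sequence and
`H⁰(f)` being an isomorphism give `H^{≥0}(G) = 0` and `H⁻¹(G) ≅ coker H⁻¹(f)`, so `H⁻¹(G)`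
satisfies `P`; moreover `H⁻¹(f)` is epi iff `H⁻¹(g) = 0`. As `Hom(-, I⟦1⟧)` is exact on the
triangle, `f^*` is injective on `Hom(-, I⟦1⟧)` iff every map `G → I⟦1⟧` vanishes on `F`.
If `H⁻¹(G) = 0`, then `G` is concentrated in degrees `≤ -2` and `Hom(G, I⟦1⟧) = 0` by the
t-structure axioms. Conversely, the truncation `G → H⁻¹(G)⟦1⟧` is an isomorphism on `H⁻¹`,
and taking `I = H⁻¹(G)` forces `H⁻¹(g) = 0`.
-/

open CategoryTheory Limits

section

variable {C : Type*} [Category C] [Preadditive C] [HasZeroObject C] [HasShift C ℤ]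
  [∀ n : ℤ, (CategoryTheory.shiftFunctor C n).Additive] [Pretriangulated C]

lemma CategoryTheory.Pretriangulated.Triangle.injective_comp_mor₁_iff (T : Triangle C)
    (hT : T ∈ distTriang C) (Z : C) :
    Function.Injective (fun g : T.obj₂ ⟶ Z => T.mor₁ ≫ g) ↔
      ∀ h : T.obj₃ ⟶ Z, T.mor₂ ≫ h = 0 := by
  constructor
  · intro hinj h
    apply hinj
    simp only [comp_distTriang_mor_zero₁₂_assoc T hT, zero_comp, comp_zero]
  · intro hzero g₁ g₂ hg
    obtain ⟨h, hh⟩ := T.yoneda_exact₂ hT (g₁ - g₂)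
      (by simpa only [Preadditive.comp_sub, sub_eq_zero] using hg)
    rw [← sub_eq_zero, hh, hzero]

end

namespace DerivedCategory

variable {A : Type*} [Category A] [Abelian A] [HasDerivedCategory A]
  {X₁ X₂ X₃ : DerivedCategory A} {f₁ : X₁ ⟶ X₂} {f₂ : X₂ ⟶ X₃} {f₃ : X₃ ⟶ X₁⟦(1 : ℤ)⟧}

lemma HomologySequence.isLE_sub_one_obj₃
    (hT : Pretriangulated.Triangle.mk f₁ f₂ f₃ ∈ distTriang _) (n₀ n₁ : ℤ) [X₃.IsLE n₀]
    (h₂ : (homologyFunctor A n₀).map f₂ = 0) [h₁ : Mono ((homologyFunctor A n₁).map f₁)]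
    (h : n₀ + 1 = n₁ := by lia) :
    X₃.IsLE (n₀ - 1) := by
  rw [isLE_iff]
  intro i hi
  obtain rfl | hi := eq_or_lt_of_le (show n₀ ≤ i by lia)
  · exact (exact₃ _ hT n₀ n₁ h).isZero_X₂ h₂ ((mono_homologyMap_mor₁_iff _ hT n₀ n₁ h).1 h₁)
  · exact X₃.isZero_of_isLE n₀ i hi

lemma HomologySequence.isLE_sub_one_obj₃_of_epi
    (hT : Pretriangulated.Triangle.mk f₁ f₂ f₃ ∈ distTriang _) (n : ℤ) [X₁.IsLE n] [X₂.IsLE n]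
    [Epi ((homologyFunctor A n).map f₁)] :
    X₃.IsLE (n - 1) := by
  have := TStructure.t.isLE_shift X₁ n 1 (n - 1)
  have := TStructure.t.isLE_of_le (X₁⟦(1 : ℤ)⟧) (n - 1) n
  have : X₃.IsLE n := TStructure.t.isLE₂ _ (Pretriangulated.rot_of_distTriang _ hT) n ‹_› ‹_›
  have : Mono ((homologyFunctor A (n + 1)).map f₁) :=
    (X₁.isZero_of_isLE n (n + 1) (by lia)).mono _
  exact isLE_sub_one_obj₃ hT n (n + 1) ((epi_homologyMap_mor₁_iff _ hT n).1 ‹_›)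

noncomputable def HomologySequence.cokernelIsoOfMono
    (hT : Pretriangulated.Triangle.mk f₁ f₂ f₃ ∈ distTriang _) (n₀ n₁ : ℤ)
    [h₁ : Mono ((homologyFunctor A n₁).map f₁)] (h : n₀ + 1 = n₁ := by lia) :
    cokernel ((homologyFunctor A n₀).map f₁) ≅ (homologyFunctor A n₀).obj X₃ :=
  have : Epi ((homologyFunctor A n₀).map (Pretriangulated.Triangle.mk f₁ f₂ f₃).mor₂) :=
    (epi_homologyMap_mor₂_iff _ hT n₀ n₁ h).2 ((mono_homologyMap_mor₁_iff _ hT n₀ n₁ h).1 h₁)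
  IsColimit.coconePointUniqueUpToIso (cokernelIsCokernel _) (exact₂ _ hT n₀).gIsCokernel

lemma exists_hom_singleFunctor_obj_isIso_homologyMap (X : DerivedCategory A) (n : ℤ)
    [X.IsLE n] :
    ∃ (Y : A) (h : X ⟶ (singleFunctor A n).obj Y), IsIso ((homologyFunctor A n).map h) := by
  obtain ⟨K, _, ⟨e⟩⟩ := X.exists_iso_Q_obj_of_isLE n
  have : (K.truncGE n).IsStrictlyLE n := by
    rw [CochainComplex.isStrictlyLE_iff]
    exact fun i hi => (K.isZero_of_isStrictlyLE n i hi).of_iso (K.truncGEXIso n i hi)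
  obtain ⟨Y, ⟨e'⟩⟩ := (Q.obj (K.truncGE n)).exists_iso_singleFunctor_obj_of_isGE_of_isLE n
  have : IsIso ((homologyFunctor A n).map (Q.map (K.πTruncGE n))) :=
    (NatIso.isIso_map_iff (homologyFunctorFactors A n) _).2
      ((quasiIsoAt_iff_isIso_homologyMap _ _).1 inferInstance)
  exact ⟨Y, e.hom ≫ Q.map (K.πTruncGE n) ≫ e'.hom, by simp only [Functor.map_comp]; infer_instance⟩

end DerivedCategory

open DerivedCategory Pretriangulated in
theorem stmt11_general {Ab : Type*} [Category Ab] [Abelian Ab]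
    [HasDerivedCategory Ab]
    (P : Ab → Prop)
    (hP_iso : ∀ {X Y : Ab}, (X ≅ Y) → P X → P Y)
    (hP_coker : ∀ {X Y : Ab} (g : X ⟶ Y), P X → P Y → P (cokernel g))
    (E F : DerivedCategory Ab) (f : E ⟶ F)
    (hE : ∀ n : ℤ, P ((DerivedCategory.homologyFunctor Ab n).obj E))
    (hF : ∀ n : ℤ, P ((DerivedCategory.homologyFunctor Ab n).obj F))
    (hE' : ∀ n : ℤ, 0 < n → IsZero ((DerivedCategory.homologyFunctor Ab n).obj E))
    (hF' : ∀ n : ℤ, 0 < n → IsZero ((DerivedCategory.homologyFunctor Ab n).obj F))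
    (hH0 : IsIso ((DerivedCategory.homologyFunctor Ab 0).map f)) :
    Epi ((DerivedCategory.homologyFunctor Ab (-1)).map f) ↔
      ∀ I : Ab, P I →
        Function.Injective
          (fun g : F ⟶ (((DerivedCategory.singleFunctor Ab 0).obj I)⟦(1 : ℤ)⟧) =>
            f ≫ g) := by
  obtain ⟨G, g, δ, hT⟩ := distinguished_cocone_triangle f
  have : E.IsLE 0 := (isLE_iff E 0).2 hE'
  have : F.IsLE 0 := (isLE_iff F 0).2 hF'
  have : G.IsLE (-1) := HomologySequence.isLE_sub_one_obj₃_of_epi hT 0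
  rw [show Epi ((homologyFunctor Ab (-1)).map f) ↔ (homologyFunctor Ab (-1)).map g = 0 from
    HomologySequence.epi_homologyMap_mor₁_iff _ hT (-1)]
  constructor
  · intro hg I _
    have hG : G.IsLE (-2) := HomologySequence.isLE_sub_one_obj₃ hT (-1) 0 hg
    exact (Triangle.injective_comp_mor₁_iff _ hT _).2 fun h => by
      rw [TStructure.t.zero_of_isLE_of_isGE h (-2) (-1) (by norm_num) hG
        (TStructure.t.isGE_shift _ 0 1 (-1)), comp_zero]
  · intro hinj
    obtain ⟨Y, h, _⟩ := G.exists_hom_singleFunctor_obj_isIso_homologyMap (-1)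
    have hY : P Y := hP_iso
      (HomologySequence.cokernelIsoOfMono hT (-1) 0 ≪≫ asIso ((homologyFunctor Ab (-1)).map h) ≪≫
        (singleFunctorCompHomologyFunctorIso Ab (-1)).app Y) (hP_coker _ (hE (-1)) (hF (-1)))
    let σ := ((singleFunctors Ab).shiftIso 1 (-1) 0 (by norm_num)).app Y
    have hgh : g ≫ h = 0 := by
      rw [← cancel_mono σ.inv, zero_comp, Category.assoc]
      exact (Triangle.injective_comp_mor₁_iff _ hT _).1 (hinj Y hY) (h ≫ σ.inv)
    rw [← cancel_mono ((homologyFunctor Ab (-1)).map h), zero_comp, ← Functor.map_comp, hgh,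
      Functor.map_zero]

theorem stmt11 {Ab : Type*} [Category Ab] [Abelian Ab] [EnoughInjectives Ab]
    [HasDerivedCategory Ab]
    (P : Ab → Prop)
    (hP_iso : ∀ {X Y : Ab}, (X ≅ Y) → P X → P Y)
    (hP_ker : ∀ {X Y : Ab} (g : X ⟶ Y), P X → P Y → P (kernel g))
    (hP_coker : ∀ {X Y : Ab} (g : X ⟶ Y), P X → P Y → P (cokernel g))
    (E F : DerivedCategory Ab) (f : E ⟶ F)
    (hE : ∀ n : ℤ, P ((DerivedCategory.homologyFunctor Ab n).obj E))
    (hF : ∀ n : ℤ, P ((DerivedCategory.homologyFunctor Ab n).obj F))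
    (hE' : ∀ n : ℤ, 0 < n → IsZero ((DerivedCategory.homologyFunctor Ab n).obj E))
    (hF' : ∀ n : ℤ, 0 < n → IsZero ((DerivedCategory.homologyFunctor Ab n).obj F))
    (hH0 : IsIso ((DerivedCategory.homologyFunctor Ab 0).map f)) :
    Epi ((DerivedCategory.homologyFunctor Ab (-1)).map f) ↔
      ∀ I : Ab, P I →
        Function.Injective
          (fun g : F ⟶ (((DerivedCategory.singleFunctor Ab 0).obj I)⟦(1 : ℤ)⟧) =>
            f ≫ g) :=
  stmt11_general P hP_iso hP_coker E F f hE hF hE' hF' hH0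
end

section
/- Let A be a ring, 0 → I₁ → B₁' → B₁ → 0 a square-zero A-algebra extension, and B₂ an A-algebra with Tor₁^A(B₁, B₂) = 0. Then applying −⊗_A B₂ yields a square-zero extension 0 → I₁⊗_A B₂ → B₁'⊗_A B₂ → B₁⊗_A B₂ → 0 of A-algebras; in particular the sequence remains exact and the ideal I₁⊗_A B₂ squares to zero in B₁'⊗_A B₂. -/
/-!
Resolve `B₂` by projective, hence flat, modules `P•`. Tensoring `0 → I₁ → B₁' → B₁ → 0` with `P•`
gives a short exact sequence of complexes, whose homology sequence contains
`Tor₁(B₁, B₂) → H₀(I₁ ⊗ P•) → H₀(B₁' ⊗ P•)`. By right exactness of `⊗`, `H₀(M ⊗ P•) ≅ M ⊗ B₂`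
naturally in `M`, so the vanishing of `Tor₁` makes `I₁ ⊗ B₂ → B₁' ⊗ B₂` injective. The rest of the
sequence is exact by right exactness, and the kernel of `B₁' ⊗ B₂ → B₁ ⊗ B₂` is the ideal generated
by `I₁`, so its square is generated by `I₁² = 0`.
-/

open TensorProduct CategoryTheory CategoryTheory.Limits

universe u

namespace CategoryTheory

variable {C D : Type*} [Category* C] [Abelian C] [Category* D] [Abelian D]

lemma ProjectiveResolution.homologyMap_zero_comp_fromLeftDerivedZero'
    {F G : C ⥤ D} [F.Additive] [G.Additive] (α : F ⟶ G) {X : C} (P : ProjectiveResolution X) :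
    HomologicalComplex.homologyMap ((NatTrans.mapHomologicalComplex α _).app P.complex) 0 ≫
        (ChainComplex.isoHomologyι₀ _).hom ≫ P.fromLeftDerivedZero' G =
      (ChainComplex.isoHomologyι₀ _).hom ≫ P.fromLeftDerivedZero' F ≫ α.app X := by
  simp only [HomologicalComplex.isoHomologyι_hom, HomologicalComplex.homologyι_naturality_assoc]
  congr 1
  simp only [← cancel_epi (HomologicalComplex.pOpcycles _ _),
    HomologicalComplex.p_opcyclesMap_assoc, NatTrans.mapHomologicalComplex_app_f,
    pOpcycles_comp_fromLeftDerivedZero', pOpcycles_comp_fromLeftDerivedZero'_assoc]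
  exact (α.naturality _).symm

theorem NatTrans.mono_app_of_isZero_leftDerived_one [HasProjectiveResolutions C]
    {F₁ F₂ F₃ : C ⥤ D} [F₁.Additive] [F₂.Additive] [F₃.Additive]
    [PreservesFiniteColimits F₁] [PreservesFiniteColimits F₂]
    (α : F₁ ⟶ F₂) (β : F₂ ⟶ F₃) (hαβ : α ≫ β = 0)
    (hexact : ∀ Y : C, Projective Y →
      (ShortComplex.mk (α.app Y) (β.app Y) (by rw [← NatTrans.comp_app, hαβ, zero_app])).ShortExact)
    {X : C} (hX : IsZero ((F₃.leftDerived 1).obj X)) : Mono (α.app X) := by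
  let P := projectiveResolution X
  let T : ShortComplex (ChainComplex D ℕ) :=
    ShortComplex.mk ((NatTrans.mapHomologicalComplex α _).app P.complex)
      ((NatTrans.mapHomologicalComplex β _).app P.complex) (by
        ext n
        exact congr_app hαβ (P.complex.X n))
  have hT : T.ShortExact :=
    HomologicalComplex.shortExact_of_degreewise_shortExact _ fun n => hexact _ (P.projective n)
  have h10 : (ComplexShape.down ℕ).Rel 1 0 := rfl
  have hδ : hT.δ 1 0 h10 = 0 := (hX.of_iso (P.isoLeftDerivedObj F₃ 1).symm).eq_of_src _ _
  have : Mono (HomologicalComplex.homologyMap T.f 0) := (hT.homology_exact₁ 1 0 h10).mono_g hδ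
  rw [← mono_comp_iff_of_isIso ((ChainComplex.isoHomologyι₀ _).hom ≫ P.fromLeftDerivedZero' F₁),
    Category.assoc, ← P.homologyMap_zero_comp_fromLeftDerivedZero' α]
  infer_instance

open MonoidalCategory in
theorem ShortComplex.ShortExact.mono_whiskerRight_of_isZero_Tor_one {A : Type u} [CommRing A]
    {S : ShortComplex (ModuleCat.{u} A)} (hS : S.ShortExact) (Q : ModuleCat.{u} A)
    (hTor : IsZero (((Tor (ModuleCat.{u} A) 1).obj S.X₃).obj Q)) : Mono (S.f ▷ Q) := by
  refine NatTrans.mono_app_of_isZero_leftDerived_one ((tensoringLeft _).map S.f)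
    ((tensoringLeft _).map S.g) (by rw [← Functor.map_comp, S.zero, Functor.map_zero])
    (fun Y hY => ?_) hTor
  have : Module.Projective A Y := (IsProjective.iff_projective Y).mpr hY
  exact hS.map_of_exact (tensorRight Y)

end CategoryTheory

theorem LinearMap.rTensor_injective_of_isZero_Tor_one {A M N P Q : Type u} [CommRing A]
    [AddCommGroup M] [Module A M] [AddCommGroup N] [Module A N]
    [AddCommGroup P] [Module A P] [AddCommGroup Q] [Module A Q]
    {f : M →ₗ[A] N} {g : N →ₗ[A] P}
    (hf : Function.Injective f) (hfg : Function.Exact f g) (hg : Function.Surjective g)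
    (hTor : IsZero (((Tor (ModuleCat.{u} A) 1).obj (ModuleCat.of A P)).obj (ModuleCat.of A Q))) :
    Function.Injective (f.rTensor Q) := by
  have hS : (ShortComplex.mk (ModuleCat.ofHom f) (ModuleCat.ofHom g)
      (ModuleCat.hom_ext hfg.linearMap_comp_eq_zero)).ShortExact :=
    { exact := (ShortComplex.ShortExact.moduleCat_exact_iff_function_exact _).mpr hfg
      mono_f := (ModuleCat.mono_iff_injective _).mpr hf
      epi_g := (ModuleCat.epi_iff_surjective _).mpr hg }
  exact (ModuleCat.mono_iff_injective _).mp (hS.mono_whiskerRight_of_isZero_Tor_one _ hTor)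

theorem Algebra.TensorProduct.rTensor_ker_pow {R A B C : Type*}
    [CommRing R] [CommRing A] [CommRing B] [CommRing C] [Algebra R A] [Algebra R B] [Algebra R C]
    {f : A →ₐ[R] B}
    (hf : Function.Surjective f) (n : ℕ) :
    RingHom.ker (map f (AlgHom.id R C) : A ⊗[R] C →+* B ⊗[R] C) ^ n =
      (RingHom.ker (f : A →+* B) ^ n).map (includeLeft : A →ₐ[R] A ⊗[R] C) := by
  rw [RingHom.ker_coe_toRingHom, rTensor_ker f hf, Ideal.map_pow]
  rfl

theorem stmt13 {A B₁' B₁ B₂ : Type u}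
    [CommRing A] [CommRing B₁'] [CommRing B₁] [CommRing B₂]
    [Algebra A B₁'] [Algebra A B₁] [Algebra A B₂]
    (π : B₁' →ₐ[A] B₁) (hπ : Function.Surjective π)
    (hsq : (RingHom.ker (π : B₁' →+* B₁)) ^ 2 = ⊥)
    (hTor : IsZero (((Tor (ModuleCat.{u} A) 1).obj
      (ModuleCat.of A B₁)).obj (ModuleCat.of A B₂))) :
    Function.Injective
      (LinearMap.rTensor B₂
        (((RingHom.ker (π : B₁' →+* B₁)).restrictScalars A).subtype)) ∧
    Function.Surjective (Algebra.TensorProduct.map π (AlgHom.id A B₂)) ∧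
    Function.Exact
      (LinearMap.rTensor B₂
        (((RingHom.ker (π : B₁' →+* B₁)).restrictScalars A).subtype))
      (Algebra.TensorProduct.map π (AlgHom.id A B₂)) ∧
    (RingHom.ker ((Algebra.TensorProduct.map π (AlgHom.id A B₂)) :
        (B₁' ⊗[A] B₂) →+* (B₁ ⊗[A] B₂))) ^ 2 = ⊥ := by
  have hexact : Function.Exact ((RingHom.ker (π : B₁' →+* B₁)).restrictScalars A).subtype
      π.toLinearMap :=
    π.toLinearMap.exact_subtype_ker_map
  refine ⟨LinearMap.rTensor_injective_of_isZero_Tor_one (Submodule.injective_subtype _) hexact hπ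
    hTor, LinearMap.rTensor_surjective B₂ hπ, rTensor_exact B₂ hexact hπ, ?_⟩
  rw [Algebra.TensorProduct.rTensor_ker_pow hπ, hsq, Ideal.map_bot]
end
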